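/- Asymptotic supremum semi-norm recovery: let γ̂ ∈ C¹([0,1], ℝ^{d-1}) and let γ(s) = (s, γ̂(s)) be its time-augmented curve in ℝ^d (adding the linear coordinate s in position i = 1). Define, for each k, l ∈ ℕ, the vector L_{k,l}(S(γ)) ∈ ℝ^{d-1} whose j-th component is the signature coefficient of γ on e₁^⊗k ⊗ e_{j+1} ⊗ e₁^⊗l. Then limsup_{n→∞} (n+1)! · max_{k+l=n} |L_{k,l}(S(γ))| = ‖γ̂'‖_∞ = sup_{s∈[0,1]} |γ̂'(s)|. -/

import Mathlib

open Filter Topology MeasureTheory Set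
open scoped Nat

/-!
Up to the factor `(k + l + 1)!`, the coefficient `L k l` is the average of `γ'` against the
Beta(k + 1, l + 1) density, a probability density on `[0, 1]`; hence `(n + 1)! ‖L k (n - k)‖`
never exceeds `sup ‖γ'‖`. For a maximiser `t` of `‖γ'‖` and `k = ⌊t n⌋`, the second moment of
that density about `t` is `O(1 / n)`, so the densities concentrate at `t` and the averages
converge to `γ' t`: the upper bound is attained in the limit.
-/

theorem integral_pow_mul_one_sub_pow (k l : ℕ) :
    ∫ s in (0:ℝ)..1, s ^ k * (1 - s) ^ l = (k ! * l ! : ℝ) / (k + l + 1)! := by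
  induction l generalizing k with
  | zero =>
    simp only [pow_zero, mul_one, integral_pow]
    rw [Nat.factorial_succ]
    push_cast
    field_simp
    simp
  | succ l ih =>
    have hsplit : ∫ s in (0:ℝ)..1, s ^ k * (1 - s) ^ (l + 1) =
        (∫ s in (0:ℝ)..1, s ^ k * (1 - s) ^ l) - ∫ s in (0:ℝ)..1, s ^ (k + 1) * (1 - s) ^ l := by
      rw [← intervalIntegral.integral_sub ((by fun_prop : Continuous _).intervalIntegrable _ _)
        ((by fun_prop : Continuous _).intervalIntegrable _ _)]
      congr 1 with s
      ring
    rw [hsplit, ih, ih, show k + 1 + l + 1 = k + (l + 1) + 1 by omega,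
      Nat.factorial_succ (k + (l + 1)), Nat.factorial_succ k, Nat.factorial_succ l,
      show k + l + 1 = k + (l + 1) by omega]
    push_cast
    field_simp
    ring

section ApproximateIdentity

variable {E : Type*} [NormedAddCommGroup E]

theorem ContinuousWithinAt.exists_norm_sub_le_add_mul_sq {f : ℝ → E} {S : Set ℝ}
    {t M ε : ℝ} (hf : ContinuousWithinAt f S t) (hM : ∀ s ∈ S, ‖f s - f t‖ ≤ M) (hε : 0 < ε) :
    ∃ C, ∀ s ∈ S, ‖f s - f t‖ ≤ ε + C * (s - t) ^ 2 := by
  obtain ⟨δ, hδ, hclose⟩ := Metric.continuousWithinAt_iff.mp hf ε hε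
  refine ⟨max M 0 / δ ^ 2, fun s hs => ?_⟩
  rcases lt_or_ge (dist s t) δ with hnear | hfar
  · have := hclose hs hnear
    rw [dist_eq_norm] at this
    have : 0 ≤ max M 0 / δ ^ 2 * (s - t) ^ 2 := by positivity
    linarith
  · have hδ2 : δ ^ 2 ≤ (s - t) ^ 2 := by
      rw [Real.dist_eq] at hfar
      nlinarith [abs_nonneg (s - t), sq_abs (s - t)]
    have : max M 0 ≤ max M 0 / δ ^ 2 * (s - t) ^ 2 := by
      rw [div_mul_eq_mul_div, le_div_iff₀ (by positivity)]
      exact mul_le_mul_of_nonneg_left hδ2 (le_max_right M 0)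
    linarith [hM s hs, le_max_left M 0]

variable [NormedSpace ℝ E]

theorem norm_integral_smul_le_of_integral_eq_one {w : ℝ → ℝ} {f : ℝ → E} {M : ℝ}
    (hw : IntervalIntegrable w volume 0 1) (hw0 : ∀ s ∈ Icc (0:ℝ) 1, 0 ≤ w s)
    (hw1 : ∫ s in (0:ℝ)..1, w s = 1) (hf : ∀ s ∈ Icc (0:ℝ) 1, ‖f s‖ ≤ M) :
    ‖∫ s in (0:ℝ)..1, w s • f s‖ ≤ M := by
  calc ‖∫ s in (0:ℝ)..1, w s • f s‖ ≤ ∫ s in (0:ℝ)..1, w s * M := by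
        refine intervalIntegral.norm_integral_le_of_norm_le zero_le_one
          (Eventually.of_forall fun s hs => ?_) (hw.mul_const M)
        rw [norm_smul, Real.norm_of_nonneg (hw0 s (Ioc_subset_Icc_self hs))]
        exact mul_le_mul_of_nonneg_left (hf s (Ioc_subset_Icc_self hs))
          (hw0 s (Ioc_subset_Icc_self hs))
    _ = M := by rw [intervalIntegral.integral_mul_const, hw1, one_mul]

theorem tendsto_integral_smul_of_tendsto_integral_mul_sq [CompleteSpace E] {ι : Type*}
    {l : Filter ι} {w : ι → ℝ → ℝ} {f : ℝ → E} {t : ℝ} (ht : t ∈ Icc (0:ℝ) 1)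
    (hf : ContinuousOn f (Icc 0 1)) (hw : ∀ i, ContinuousOn (w i) (Icc 0 1))
    (hw0 : ∀ i, ∀ s ∈ Icc (0:ℝ) 1, 0 ≤ w i s) (hw1 : ∀ i, ∫ s in (0:ℝ)..1, w i s = 1)
    (hmom : Tendsto (fun i => ∫ s in (0:ℝ)..1, w i s * (s - t) ^ 2) l (𝓝 0)) :
    Tendsto (fun i => ∫ s in (0:ℝ)..1, w i s • f s) l (𝓝 (f t)) := by
  rw [Metric.tendsto_nhds]
  intro ε hε
  obtain ⟨M, hM⟩ := isCompact_Icc.exists_bound_of_continuousOn (hf.sub continuousOn_const)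
  obtain ⟨C, hC⟩ := (hf t ht).exists_norm_sub_le_add_mul_sq hM (half_pos hε)
  have hsmall : ∀ᶠ i in l, C * ∫ s in (0:ℝ)..1, w i s * (s - t) ^ 2 < ε / 2 := by
    have hCmom := hmom.const_mul C
    rw [mul_zero] at hCmom
    exact hCmom.eventually_lt_const (half_pos hε)
  filter_upwards [hsmall] with i hi
  have hint : ∀ g : ℝ → ℝ, Continuous g →
      IntervalIntegrable (fun s => w i s * g s) volume 0 1 :=
    fun g hg => ((hw i).mul hg.continuousOn).intervalIntegrable_of_Icc zero_le_one
  have hdiff :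
      (∫ s in (0:ℝ)..1, w i s • f s) - f t = ∫ s in (0:ℝ)..1, w i s • (f s - f t) := by
    simp only [smul_sub]
    have hwf : IntervalIntegrable (fun s => w i s • f s) volume 0 1 :=
      ((hw i).smul hf).intervalIntegrable_of_Icc zero_le_one
    have hwc : IntervalIntegrable (fun s => w i s • f t) volume 0 1 :=
      ((hw i).smul continuousOn_const).intervalIntegrable_of_Icc zero_le_one
    rw [intervalIntegral.integral_sub hwf hwc,
      intervalIntegral.integral_smul_const, hw1, one_smul]
  rw [dist_eq_norm, hdiff]
  calc ‖∫ s in (0:ℝ)..1, w i s • (f s - f t)‖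
      ≤ ∫ s in (0:ℝ)..1, w i s * (ε / 2 + C * (s - t) ^ 2) := by
        refine intervalIntegral.norm_integral_le_of_norm_le zero_le_one
          (Eventually.of_forall fun s hs => ?_) (hint _ (by fun_prop))
        have hs' := Ioc_subset_Icc_self hs
        rw [norm_smul, Real.norm_of_nonneg (hw0 i s hs')]
        exact mul_le_mul_of_nonneg_left (hC s hs') (hw0 i s hs')
    _ = ε / 2 + C * ∫ s in (0:ℝ)..1, w i s * (s - t) ^ 2 := by
        simp only [mul_add]
        rw [intervalIntegral.integral_add (hint _ continuous_const) (hint _ (by fun_prop)),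
          intervalIntegral.integral_mul_const, hw1, one_mul,
          ← intervalIntegral.integral_const_mul]
        congr 1
        exact intervalIntegral.integral_congr fun s _ => by ring
    _ < ε := by linarith

end ApproximateIdentity

/-- The density of the Beta(k + 1, l + 1) distribution. -/
noncomputable def betaKernel (k l : ℕ) (s : ℝ) : ℝ :=
  (k + l + 1)! / (k ! * l ! : ℝ) * (s ^ k * (1 - s) ^ l)

theorem continuous_betaKernel (k l : ℕ) : Continuous (betaKernel k l) := by
  unfold betaKernel
  fun_prop

theorem betaKernel_nonneg (k l : ℕ) {s : ℝ} (hs : s ∈ Icc (0:ℝ) 1) :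
    0 ≤ betaKernel k l s := by
  have := hs.1
  have := sub_nonneg.mpr hs.2
  unfold betaKernel
  positivity

theorem integral_betaKernel_mul_pow (k l j : ℕ) :
    ∫ s in (0:ℝ)..1, betaKernel k l s * s ^ j
      = ((k + j)! * (k + l + 1)! : ℝ) / (k ! * (k + j + l + 1)!) := by
  have hpow : ∀ s : ℝ, betaKernel k l s * s ^ j
      = (k + l + 1)! / (k ! * l ! : ℝ) * (s ^ (k + j) * (1 - s) ^ l) := fun s => by
    rw [betaKernel]; ring
  simp_rw [hpow]
  rw [intervalIntegral.integral_const_mul, integral_pow_mul_one_sub_pow]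
  field_simp

theorem integral_betaKernel (k l : ℕ) : ∫ s in (0:ℝ)..1, betaKernel k l s = 1 := by
  have h := integral_betaKernel_mul_pow k l 0
  simp only [pow_zero, mul_one, add_zero] at h
  rw [h, div_self (by positivity)]

theorem integral_betaKernel_mul_sq_sub (k l : ℕ) (t : ℝ) :
    ∫ s in (0:ℝ)..1, betaKernel k l s * (s - t) ^ 2
      = (k + 1) * (k + 2) / ((k + l + 2) * (k + l + 3)) - 2 * t * (k + 1) / (k + l + 2)
        + t ^ 2 := by
  have hint : ∀ j : ℕ, IntervalIntegrable (fun s => betaKernel k l s * s ^ j) volume 0 1 :=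
    fun j => ((continuous_betaKernel k l).mul (continuous_pow j)).intervalIntegrable 0 1
  have hexpand : ∀ s : ℝ, betaKernel k l s * (s - t) ^ 2 = betaKernel k l s * s ^ 2
      - 2 * t * (betaKernel k l s * s ^ 1) + t ^ 2 * (betaKernel k l s * s ^ 0) := fun s => by
    ring
  simp_rw [hexpand]
  rw [intervalIntegral.integral_add ((hint 2).sub ((hint 1).const_mul _))
      ((hint 0).const_mul _),
    intervalIntegral.integral_sub (hint 2) ((hint 1).const_mul _),
    intervalIntegral.integral_const_mul, intervalIntegral.integral_const_mul,
    integral_betaKernel_mul_pow, integral_betaKernel_mul_pow, integral_betaKernel_mul_pow]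
  simp only [Nat.add_zero, Nat.factorial_succ,
    show k + 2 + l + 1 = k + l + 1 + 1 + 1 by omega, show k + 1 + l + 1 = k + l + 1 + 1 by omega]
  push_cast
  field_simp
  ring

theorem integral_betaKernel_mul_sq_sub_le {k l : ℕ} {t : ℝ} (ht : t ∈ Icc (0:ℝ) 1)
    (hk : (k : ℝ) ≤ t * (k + l)) (hk' : t * (k + l) < k + 1) :
    ∫ s in (0:ℝ)..1, betaKernel k l s * (s - t) ^ 2 ≤ 10 / (k + l + 2) := by
  rw [integral_betaKernel_mul_sq_sub]
  set n : ℝ := k + l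
  have hn : (0 : ℝ) ≤ n := by positivity
  have hcomb : (k + 1) * (k + 2) / ((n + 2) * (n + 3)) - 2 * t * (k + 1) / (n + 2) + t ^ 2
      = ((k + 1) * (k + 2) - 2 * t * (k + 1) * (n + 3) + t ^ 2 * (n + 2) * (n + 3))
        / ((n + 2) * (n + 3)) := by
    field_simp
  rw [hcomb, div_le_div_iff₀ (by positivity) (by positivity)]
  have hfrac : 0 ≤ t * n - k := by linarith
  -- variance `(k + 1) (l + 1) / ((n + 2) ^ 2 (n + 3)) ≤ 1 / (n + 2)` plus squared bias
  -- `((k + 1 - t (n + 2)) / (n + 2)) ^ 2 ≤ 4 / (n + 2) ^ 2`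
  nlinarith [mul_nonneg hn (sq_nonneg (1 - 2 * t)),
    mul_nonneg hfrac (by linarith : 0 ≤ 1 - (t * n - k)), mul_nonneg hfrac (sub_nonneg.mpr ht.2),
    mul_nonneg ht.1 (sub_nonneg.mpr ht.2)]

theorem Nat.floor_mul_natCast_le {t : ℝ} (ht : t ≤ 1) (n : ℕ) : ⌊t * n⌋₊ ≤ n :=
  Nat.floor_le_of_le (mul_le_of_le_one_left n.cast_nonneg ht)

theorem tendsto_integral_betaKernel_floor_mul_sq_sub {t : ℝ} (ht : t ∈ Icc (0:ℝ) 1) :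
    Tendsto (fun n : ℕ => ∫ s in (0:ℝ)..1, betaKernel ⌊t * n⌋₊ (n - ⌊t * n⌋₊) s * (s - t) ^ 2)
      atTop (𝓝 0) := by
  have hbound : Tendsto (fun n : ℕ => 10 / ((n : ℝ) + 2)) atTop (𝓝 0) :=
    tendsto_const_nhds.div_atTop (tendsto_natCast_atTop_atTop.atTop_add tendsto_const_nhds)
  refine tendsto_of_tendsto_of_tendsto_of_le_of_le tendsto_const_nhds hbound (fun n => ?_)
    fun n => ?_
  · refine intervalIntegral.integral_nonneg zero_le_one fun s hs => ?_
    exact mul_nonneg (betaKernel_nonneg _ _ hs) (sq_nonneg _)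
  · have htn : 0 ≤ t * n := mul_nonneg ht.1 n.cast_nonneg
    have hsum : (⌊t * n⌋₊ : ℝ) + ((n - ⌊t * n⌋₊ : ℕ) : ℝ) = n := by
      rw [Nat.cast_sub (Nat.floor_mul_natCast_le ht.2 n)]
      ring
    have h := integral_betaKernel_mul_sq_sub_le ht (by rw [hsum]; exact Nat.floor_le htn)
      (by rw [hsum]; exact Nat.lt_floor_add_one _)
    rwa [hsum] at h

theorem factorial_smul_eq_integral_betaKernel_smul {m k l : ℕ}
    {f : ℝ → EuclideanSpace ℝ (Fin m)} (hf : ContinuousOn f (Icc 0 1))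
    {v : EuclideanSpace ℝ (Fin m)}
    (hv : ∀ j, v j = ∫ s in (0:ℝ)..1, s ^ k * (1 - s) ^ l / (k ! * l !) * f s j) :
    ((k + l + 1)! : ℝ) • v = ∫ s in (0:ℝ)..1, betaKernel k l s • f s := by
  ext j
  have hint : IntervalIntegrable (fun s => betaKernel k l s • f s) volume 0 1 :=
    ((continuous_betaKernel k l).continuousOn.smul hf).intervalIntegrable_of_Icc zero_le_one
  have hproj := (EuclideanSpace.proj (𝕜 := ℝ) j).intervalIntegral_comp_comm hint
  simp only [EuclideanSpace.proj, PiLp.proj_apply] at hproj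
  rw [← hproj, PiLp.smul_apply, hv, smul_eq_mul, ← intervalIntegral.integral_const_mul]
  refine intervalIntegral.integral_congr fun s _ => ?_
  simp only [PiLp.smul_apply, smul_eq_mul, betaKernel]
  field_simp

theorem stmt_17_general (m : ℕ) (γ' : ℝ → EuclideanSpace ℝ (Fin m))
    (hγ' : ContinuousOn γ' (Set.Icc (0:ℝ) 1))
    (L : ℕ → ℕ → EuclideanSpace ℝ (Fin m))
    (hL : ∀ k l : ℕ, ∀ j : Fin m,
      L k l j = ∫ s in (0:ℝ)..1, s ^ k * (1 - s) ^ l / (k.factorial * l.factorial) * γ' s j) :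
    Filter.limsup (fun n : ℕ => ((n + 1).factorial : ℝ) *
        (Finset.range (n + 1)).sup' ⟨0, Finset.mem_range.mpr (Nat.succ_pos n)⟩ (fun k => ‖L k (n - k)‖))
      Filter.atTop = ⨆ s : Set.Icc (0:ℝ) 1, ‖γ' s.val‖ := by
  set a : ℕ → ℝ := fun n => ((n + 1).factorial : ℝ) *
    (Finset.range (n + 1)).sup' ⟨0, Finset.mem_range.mpr (Nat.succ_pos n)⟩ (fun k => ‖L k (n - k)‖)
  obtain ⟨t, ht, hmax⟩ := isCompact_Icc.exists_isMaxOn (nonempty_Icc.mpr zero_le_one) hγ'.norm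
  rw [hmax.iSup_eq ht]
  have hcoef : ∀ n k, k ≤ n →
      ((n + 1)! : ℝ) * ‖L k (n - k)‖ = ‖∫ s in (0:ℝ)..1, betaKernel k (n - k) s • γ' s‖ := by
    intro n k hk
    rw [← factorial_smul_eq_integral_betaKernel_smul hγ' (hL k (n - k)), norm_smul,
      Nat.add_sub_cancel' hk, Real.norm_natCast]
  have hle : ∀ n, a n ≤ ‖γ' t‖ := fun n => by
    rw [← le_div_iff₀' (by positivity)]
    refine Finset.sup'_le _ _ fun k hk => ?_
    rw [le_div_iff₀' (by positivity), hcoef n k (Finset.mem_range_succ_iff.mp hk)]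
    exact norm_integral_smul_le_of_integral_eq_one
      ((continuous_betaKernel _ _).intervalIntegrable 0 1) (fun s hs => betaKernel_nonneg _ _ hs)
      (integral_betaKernel _ _) fun s hs => hmax hs
  have hkn := Nat.floor_mul_natCast_le ht.2
  have hge : ∀ n, ((n + 1)! : ℝ) * ‖L ⌊t * n⌋₊ (n - ⌊t * n⌋₊)‖ ≤ a n := fun n =>
    mul_le_mul_of_nonneg_left (Finset.le_sup' (fun k => ‖L k (n - k)‖)
      (Finset.mem_range_succ_iff.mpr (hkn n))) (by positivity)
  have hlim : Tendsto (fun n : ℕ => ((n + 1)! : ℝ) * ‖L ⌊t * n⌋₊ (n - ⌊t * n⌋₊)‖) atTop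
      (𝓝 ‖γ' t‖) := by
    simp_rw [fun n : ℕ => hcoef n _ (hkn n)]
    exact (tendsto_integral_smul_of_tendsto_integral_mul_sq ht hγ'
      (fun n => (continuous_betaKernel _ _).continuousOn) (fun n s hs => betaKernel_nonneg _ _ hs)
      (fun n => integral_betaKernel _ _) (tendsto_integral_betaKernel_floor_mul_sq_sub ht)).norm
  exact (tendsto_of_tendsto_of_tendsto_of_le_of_le hlim tendsto_const_nhds hge hle).limsup_eq

theorem stmt_17 (m : ℕ) (γ γ' : ℝ → EuclideanSpace ℝ (Fin m))
    (hγ : ∀ s ∈ Set.Icc (0:ℝ) 1, HasDerivAt γ (γ' s) s)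
    (hγ' : ContinuousOn γ' (Set.Icc (0:ℝ) 1))
    (L : ℕ → ℕ → EuclideanSpace ℝ (Fin m))
    (hL : ∀ k l : ℕ, ∀ j : Fin m,
      L k l j = ∫ s in (0:ℝ)..1, s ^ k * (1 - s) ^ l / (k.factorial * l.factorial) * γ' s j) :
    Filter.limsup (fun n : ℕ => ((n + 1).factorial : ℝ) *
        (Finset.range (n + 1)).sup' ⟨0, Finset.mem_range.mpr (Nat.succ_pos n)⟩ (fun k => ‖L k (n - k)‖))
      Filter.atTop = ⨆ s : Set.Icc (0:ℝ) 1, ‖γ' s.val‖ :=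
  stmt_17_general m γ' hγ' L hL
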